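/- arXiv:2201.07550 — 3 statements merged into one kernel-verified Lean document; each statement's English description precedes it below -/
import Mathlib

section
/- Let K be an algebraically closed field of characteristic 0 and let G ∈ K[x₀,…,x_m] be homogeneous of degree d ≥ 2 whose first partial derivatives are linearly independent over K. Then hess(G) = det Hess(G) is not the zero polynomial if and only if there exist k₀,…,k_m ∈ K such that, setting L = Σᵢ kᵢ ∂/∂xᵢ, for every operator y = Σᵢ cᵢ ∂/∂xᵢ (cᵢ ∈ K) the vanishing (L^{d−2}·y)(G) = 0 implies y(G) = 0 (i.e., the algebra Q/Ann_Q(G) has the strong Lefschetz property in degree 1). -/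
/-!
Write `L = Σ kᵢ ∂ᵢ` and `y = Σ cᵢ ∂ᵢ`. Since partial derivatives commute with `L`, the `i`-th
partial of the linear form `(L^(d-2) y)(G)` is `L^(d-2)` applied to the form `∂ᵢ y(G)` of degree
`d - 2`, and by Euler's identity `L^e` acts on forms of degree `e` as `e!` times evaluation at
`k`. So `(L^(d-2) y)(G) = 0` exactly when `Hess(G)(k) c = 0`, while `y(G) = 0` exactly when
`c = 0` by independence of the partials. Strong Lefschetz for `L` is therefore invertibility of
`Hess(G)(k)`, and over an infinite field `hess(G) ≠ 0` iff it does not vanish at some `k`.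
-/

namespace MvPolynomial

open Finset Matrix

theorem ne_zero_iff_exists_eval_ne_zero {R τ : Type*} [CommRing R] [IsDomain R] [Infinite R]
    (p : MvPolynomial τ R) : p ≠ 0 ↔ ∃ x, eval x p ≠ 0 := by
  simp [funext_iff]

section CommSemiring

variable {R σ : Type*} [CommSemiring R] [Fintype σ]

noncomputable def dirDeriv (k : σ → R) : Module.End R (MvPolynomial σ R) :=
  ∑ i, k i • (pderiv i).toLinearMap

noncomputable def hessian (φ : MvPolynomial σ R) : Matrix σ σ (MvPolynomial σ R) :=
  Matrix.of fun i j => pderiv i (pderiv j φ)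

theorem dirDeriv_apply (k : σ → R) (φ : MvPolynomial σ R) :
    dirDeriv k φ = ∑ i, k i • pderiv i φ := by
  simp [dirDeriv, LinearMap.sum_apply]

theorem eval_pderiv_dirDeriv (φ : MvPolynomial σ R) (k c : σ → R) (i : σ) :
    eval k (pderiv i (dirDeriv c φ)) = ((hessian φ).map (eval k) *ᵥ c) i := by
  simp [dirDeriv_apply, hessian, mulVec, dotProduct, smul_eq_C_mul, mul_comm]

theorem IsHomogeneous.dirDeriv {φ : MvPolynomial σ R} {n : ℕ} (h : φ.IsHomogeneous n)
    (k : σ → R) : (MvPolynomial.dirDeriv k φ).IsHomogeneous (n - 1) := by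
  rw [dirDeriv_apply]
  exact IsHomogeneous.sum _ _ _ fun i _ => by rw [smul_eq_C_mul]; exact h.pderiv.C_mul _

theorem IsHomogeneous.dirDeriv_pow {φ : MvPolynomial σ R} {n : ℕ} (h : φ.IsHomogeneous n)
    (k : σ → R) (e : ℕ) : ((MvPolynomial.dirDeriv k ^ e) φ).IsHomogeneous (n - e) := by
  induction e with
  | zero => simpa using h
  | succ e ih => simpa [pow_succ', Nat.sub_sub] using ih.dirDeriv k

theorem IsHomogeneous.eval_dirDeriv_self {φ : MvPolynomial σ R} {n : ℕ}
    (h : φ.IsHomogeneous n) (k : σ → R) :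
    eval k (MvPolynomial.dirDeriv k φ) = n * eval k φ := by
  simpa [dirDeriv_apply, smul_eq_C_mul] using congr(eval k $(h.sum_X_mul_pderiv))

theorem IsHomogeneous.dirDeriv_pow_self {φ : MvPolynomial σ R} {n : ℕ}
    (h : φ.IsHomogeneous n) (k : σ → R) :
    (MvPolynomial.dirDeriv k ^ n) φ = C (n.factorial * eval k φ) := by
  induction n generalizing φ with
  | zero =>
    rw [← totalDegree_zero_iff_isHomogeneous, totalDegree_eq_zero_iff_eq_C] at h
    rw [h]
    simp
  | succ n ih =>
    rw [pow_succ, Module.End.mul_apply, ih (h.dirDeriv k), h.eval_dirDeriv_self k,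
      Nat.factorial_succ]
    push_cast
    congr 1
    ring

theorem IsHomogeneous.eq_zero_iff_forall_pderiv_eq_zero [IsAddTorsionFree R]
    {φ : MvPolynomial σ R} {n : ℕ} (h : φ.IsHomogeneous n) (hn : n ≠ 0) :
    φ = 0 ↔ ∀ i, pderiv i φ = 0 := by
  refine ⟨by rintro rfl; simp, fun hφ => ?_⟩
  have euler := h.sum_X_mul_pderiv
  simp only [hφ, mul_zero, sum_const_zero] at euler
  exact (smul_eq_zero.mp euler.symm).resolve_left hn

end CommSemiring

section CommRing

variable {R σ : Type*} [CommRing R]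

theorem pderiv_pderiv_comm (i j : σ) (φ : MvPolynomial σ R) :
    pderiv i (pderiv j φ) = pderiv j (pderiv i φ) := by
  classical
  have bracket_eq_zero :
      ⁅pderiv i, pderiv j⁆ = (0 : Derivation R (MvPolynomial σ R) (MvPolynomial σ R)) :=
    derivation_ext fun l => by
      rw [Derivation.commutator_apply]
      simp [pderiv_X, Pi.single_apply, apply_ite]
  simpa [Derivation.commutator_apply, sub_eq_zero] using congr($bracket_eq_zero φ)

variable [Fintype σ]

theorem commute_pderiv_dirDeriv (i : σ) (k : σ → R) :
    Commute (pderiv i).toLinearMap (dirDeriv k) :=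
  LinearMap.ext fun φ => by simp [dirDeriv_apply, pderiv_pderiv_comm i]

theorem pderiv_dirDeriv_pow (i : σ) (k : σ → R) (e : ℕ) (φ : MvPolynomial σ R) :
    pderiv i ((dirDeriv k ^ e) φ) = (dirDeriv k ^ e) (pderiv i φ) :=
  LinearMap.congr_fun ((commute_pderiv_dirDeriv i k).pow_right e).eq φ

theorem IsHomogeneous.pderiv_dirDeriv_pow_mul_dirDeriv {φ : MvPolynomial σ R} {n : ℕ}
    (h : φ.IsHomogeneous n) (k c : σ → R) (i : σ) :
    pderiv i ((MvPolynomial.dirDeriv k ^ (n - 2) * MvPolynomial.dirDeriv c) φ) =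
      C ((n - 2).factorial * ((hessian φ).map (eval k) *ᵥ c) i) := by
  rw [Module.End.mul_apply, pderiv_dirDeriv_pow, ← eval_pderiv_dirDeriv]
  exact (h.dirDeriv c).pderiv.dirDeriv_pow_self k

theorem IsHomogeneous.dirDeriv_pow_mul_dirDeriv_eq_zero_iff [IsDomain R] [CharZero R]
    {φ : MvPolynomial σ R} {n : ℕ} (h : φ.IsHomogeneous n) (hn : 2 ≤ n) (k c : σ → R) :
    (MvPolynomial.dirDeriv k ^ (n - 2) * MvPolynomial.dirDeriv c) φ = 0 ↔
      (hessian φ).map (eval k) *ᵥ c = 0 := by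
  have hlinear :
      ((MvPolynomial.dirDeriv k ^ (n - 2) * MvPolynomial.dirDeriv c) φ).IsHomogeneous 1 := by
    simpa [show n - 1 - (n - 2) = 1 by omega] using (h.dirDeriv c).dirDeriv_pow k (n - 2)
  simp only [hlinear.eq_zero_iff_forall_pderiv_eq_zero one_ne_zero, _root_.funext_iff,
    Pi.zero_apply, h.pderiv_dirDeriv_pow_mul_dirDeriv, C_eq_zero, mul_eq_zero,
    Nat.cast_eq_zero, Nat.factorial_ne_zero, false_or]

theorem dirDeriv_eq_zero_iff {φ : MvPolynomial σ R}
    (hφ : LinearIndependent R fun i => pderiv i φ) (c : σ → R) :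
    dirDeriv c φ = 0 ↔ c = 0 := by
  refine ⟨fun h => _root_.funext ?_, by rintro rfl; simp [dirDeriv]⟩
  exact Fintype.linearIndependent_iff.mp hφ c ((dirDeriv_apply c φ).symm.trans h)

end CommRing

end MvPolynomial

open MvPolynomial in
theorem hessian_ne_zero_iff_slp_degree_one_general
    {K : Type*} [Field K] [CharZero K]
    {m : ℕ} {d : ℕ} (hd : 2 ≤ d)
    {G : MvPolynomial (Fin (m + 1)) K} (hG : G.IsHomogeneous d)
    (hind : LinearIndependent K (fun i : Fin (m + 1) => MvPolynomial.pderiv i G)) :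
    (Matrix.of fun i j : Fin (m + 1) =>
        MvPolynomial.pderiv i (MvPolynomial.pderiv j G)).det ≠ 0 ↔
    ∃ k : Fin (m + 1) → K,
      ∀ c : Fin (m + 1) → K,
        ((((∑ i, k i • (MvPolynomial.pderiv i).toLinearMap :
              Module.End K (MvPolynomial (Fin (m + 1)) K)) ^ (d - 2) *
            (∑ i, c i • (MvPolynomial.pderiv i).toLinearMap) :
              Module.End K (MvPolynomial (Fin (m + 1)) K)) :
            MvPolynomial (Fin (m + 1)) K →ₗ[K] MvPolynomial (Fin (m + 1)) K) G = 0 →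
        ((∑ i, c i • (MvPolynomial.pderiv i).toLinearMap :
            Module.End K (MvPolynomial (Fin (m + 1)) K)) :
            MvPolynomial (Fin (m + 1)) K →ₗ[K] MvPolynomial (Fin (m + 1)) K) G = 0) := by
  change (hessian G).det ≠ 0 ↔
    ∃ k : Fin (m + 1) → K, ∀ c, (dirDeriv k ^ (d - 2) * dirDeriv c) G = 0 → dirDeriv c G = 0
  rw [ne_zero_iff_exists_eval_ne_zero]
  refine exists_congr fun k => ?_
  simp only [RingHom.map_det, RingHom.mapMatrix_apply, Ne, ← Matrix.exists_mulVec_eq_zero_iff,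
    hG.dirDeriv_pow_mul_dirDeriv_eq_zero_iff hd, dirDeriv_eq_zero_iff hind, not_exists, not_and,
    not_imp_not]

/-- **Hessian criterion for strong Lefschetz in degree 1.** For `G` homogeneous of degree
`d ≥ 2` over an algebraically closed field of characteristic `0`, with linearly independent
first partial derivatives, the Hessian determinant of `G` is not identically zero if and
only if there is a first order operator `L = Σ kᵢ ∂ᵢ` such that for every first order
operator `y = Σ cᵢ ∂ᵢ`, `(L^(d-2) · y)(G) = 0` implies `y(G) = 0`
(strong Lefschetz in degree `1` for `Q / Ann_Q(G)`). -/
theorem hessian_ne_zero_iff_slp_degree_one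
    {K : Type*} [Field K] [IsAlgClosed K] [CharZero K]
    {m : ℕ} {d : ℕ} (hd : 2 ≤ d)
    {G : MvPolynomial (Fin (m + 1)) K} (hG : G.IsHomogeneous d)
    (hind : LinearIndependent K (fun i : Fin (m + 1) => MvPolynomial.pderiv i G)) :
    (Matrix.of fun i j : Fin (m + 1) =>
        MvPolynomial.pderiv i (MvPolynomial.pderiv j G)).det ≠ 0 ↔
    ∃ k : Fin (m + 1) → K,
      ∀ c : Fin (m + 1) → K,
        ((((∑ i, k i • (MvPolynomial.pderiv i).toLinearMap :
              Module.End K (MvPolynomial (Fin (m + 1)) K)) ^ (d - 2) *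
            (∑ i, c i • (MvPolynomial.pderiv i).toLinearMap) :
              Module.End K (MvPolynomial (Fin (m + 1)) K)) :
            MvPolynomial (Fin (m + 1)) K →ₗ[K] MvPolynomial (Fin (m + 1)) K) G = 0 →
        ((∑ i, c i • (MvPolynomial.pderiv i).toLinearMap :
            Module.End K (MvPolynomial (Fin (m + 1)) K)) :
            MvPolynomial (Fin (m + 1)) K →ₗ[K] MvPolynomial (Fin (m + 1)) K) G = 0) :=
  hessian_ne_zero_iff_slp_degree_one_general hd hG hind
end

section
/- Let K be a field and let R = ⊕_{i=0}^N R^i be a graded Artinian K-algebra satisfying Poincaré duality with socle in degree N (dim_K R^N = 1 and every multiplication pairing R^i × R^{N−i} → R^N is perfect). Fix e with 1 ≤ e ≤ N−1 and a nonzero α ∈ R^e. Then the quotient R_α = R/(0:α) by the annihilator ideal (0:α) = {r ∈ R : rα = 0} is a graded Artinian Gorenstein algebra with socle in degree N−e; concretely: dim_K (α·R^{N−e}) = 1, and for every 0 ≤ i ≤ N−e and every x ∈ R^i, if x·y·α = 0 for all y ∈ R^{N−e−i}, then x·α = 0. -/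
/-! Multiplication by `α` maps `R^(N-e)` into the one-dimensional socle `R^N`, and duality
provides some `y ∈ R^(N-e)` with `α * y ≠ 0`, so the image is a line. If `x * α ≠ 0` with
`x ∈ R^i`, duality in degree `i + e` gives `y ∈ R^(N-e-i)` with `x * α * y ≠ 0`, which is
`x * y * α` up to commutativity. -/

open Module

theorem Submodule.map_mulLeft_le_of_mem_graded {ι K R : Type*} [AddMonoid ι] [CommSemiring K]
    [Semiring R] [Algebra K R] (𝒜 : ι → Submodule K R) [SetLike.GradedMonoid 𝒜] {e : ι} {α : R}
    (hα : α ∈ 𝒜 e) (j : ι) : (𝒜 j).map (LinearMap.mulLeft K α) ≤ 𝒜 (e + j) := by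
  rintro _ ⟨y, hy, rfl⟩
  exact SetLike.mul_mem_graded hα hy

theorem Submodule.finrank_eq_one_of_le_of_ne_bot {K V : Type*} [DivisionRing K] [AddCommGroup V]
    [Module K V] {p q : Submodule K V} (hpq : p ≤ q) (hq : finrank K q = 1) (hp : p ≠ ⊥) :
    finrank K p = 1 := by
  have : FiniteDimensional K q := Module.finite_of_finrank_eq_succ hq
  have : FiniteDimensional K p := Submodule.finiteDimensional_of_le hpq
  have hle : finrank K p ≤ 1 := hq ▸ Submodule.finrank_mono hpq
  have hne : finrank K p ≠ 0 := fun h => hp (Submodule.finrank_eq_zero.mp h)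
  omega

theorem gorenstein_quotient_by_annihilator_general
    {K : Type*} [Field K] {R : Type*} [CommRing R] [Algebra K R]
    (𝒜 : ℕ → Submodule K R) [GradedAlgebra 𝒜] (N : ℕ)
    (hsoc : Module.finrank K (𝒜 N) = 1)
    (hdual : ∀ i ≤ N, ∀ x ∈ 𝒜 i, x ≠ 0 → ∃ y ∈ 𝒜 (N - i), x * y ≠ 0)
    {e : ℕ} (he2 : e + 1 ≤ N)
    {α : R} (hα : α ∈ 𝒜 e) (hα0 : α ≠ 0) :
    Module.finrank K (Submodule.map (LinearMap.mulLeft K α) (𝒜 (N - e))) = 1 ∧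
    ∀ i ≤ N - e, ∀ x ∈ 𝒜 i,
      (∀ y ∈ 𝒜 (N - e - i), x * y * α = 0) → x * α = 0 := by
  constructor
  · have hle := Submodule.map_mulLeft_le_of_mem_graded 𝒜 hα (N - e)
    rw [show e + (N - e) = N by omega] at hle
    refine Submodule.finrank_eq_one_of_le_of_ne_bot hle hsoc ?_
    obtain ⟨y, hy, hαy⟩ := hdual e (by omega) α hα hα0
    exact (Submodule.ne_bot_iff _).mpr ⟨α * y, ⟨y, hy, rfl⟩, hαy⟩
  · intro i hi x hx hxy
    by_contra hxα
    obtain ⟨y, hy, hxαy⟩ := hdual (i + e) (by omega) (x * α) (SetLike.mul_mem_graded hx hα) hxα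
    rw [show N - (i + e) = N - e - i by omega] at hy
    exact hxαy (by rw [mul_right_comm]; exact hxy y hy)

/-- **Gorenstein quotient lemma.** Let `R = ⊕_{i=0}^N R^i` be a graded Artinian algebra
over a field `K` satisfying Poincaré duality with socle in degree `N`, and let `α ∈ R^e`
be nonzero with `1 ≤ e ≤ N - 1`.  Then `R/(0:α)` is Gorenstein with socle in degree
`N - e`; concretely: `dim_K (α · R^(N-e)) = 1`, and for every `0 ≤ i ≤ N - e` and every
`x ∈ R^i`, if `x·y·α = 0` for all `y ∈ R^(N-e-i)`, then `x·α = 0`. -/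
theorem gorenstein_quotient_by_annihilator
    {K : Type*} [Field K] {R : Type*} [CommRing R] [Algebra K R]
    (𝒜 : ℕ → Submodule K R) [GradedAlgebra 𝒜] (N : ℕ)
    (hfin : ∀ i, FiniteDimensional K (𝒜 i))
    (htop : ∀ i, N < i → 𝒜 i = ⊥)
    (hsoc : Module.finrank K (𝒜 N) = 1)
    (hdual : ∀ i ≤ N, ∀ x ∈ 𝒜 i, x ≠ 0 → ∃ y ∈ 𝒜 (N - i), x * y ≠ 0)
    {e : ℕ} (he1 : 1 ≤ e) (he2 : e + 1 ≤ N)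
    {α : R} (hα : α ∈ 𝒜 e) (hα0 : α ≠ 0) :
    Module.finrank K (Submodule.map (LinearMap.mulLeft K α) (𝒜 (N - e))) = 1 ∧
    ∀ i ≤ N - e, ∀ x ∈ 𝒜 i,
      (∀ y ∈ 𝒜 (N - e - i), x * y * α = 0) → x * α = 0 :=
  gorenstein_quotient_by_annihilator_general 𝒜 N hsoc hdual he2 hα hα0
end

section
/- Let K be a field of characteristic 0 and let R be a standard Artinian Gorenstein K-algebra with socle in degree N. Let i ≥ 1 and j ≥ 1 be integers with i + j ≤ N − 1, and let x, y ∈ R¹ satisfy x^i y^j = 0. Assume that for every v ∈ R¹ there exists w ∈ R¹ such that i·v·x^{i−1}·y^j + j·w·x^i·y^{j−1} = 0. Then x^{i−1}·y^{j+1} = 0. -/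
/-!
Put `m = x^(i-1) y^(j+1)`. Multiplying the deformation identity by `y` kills its second term
(it becomes a multiple of `x^i y^j = 0`) and leaves `i · v · m = 0`, so in characteristic `0`
the whole of `R¹` annihilates `m`. Since `R` is generated in degree `1`, all of `R` then acts on
`m` through scalars, so `m` is killed by every homogeneous element of positive degree. As
`deg m = i + j < N`, Gorenstein duality forces `m = 0`.
-/

theorem DirectSum.eq_zero_of_mem_of_mem_of_ne {ι M σ : Type*} [DecidableEq ι]
    [AddCommMonoid M] [SetLike σ M] [AddSubmonoidClass σ M] {ℳ : ι → σ}
    [DirectSum.Decomposition ℳ] {a b : ι} {m : M} (ha : m ∈ ℳ a) (hb : m ∈ ℳ b)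
    (hab : a ≠ b) : m = 0 := by
  rw [← DirectSum.decompose_of_mem_same ℳ ha]
  exact DirectSum.decompose_of_mem_ne ℳ hb hab.symm

theorem Algebra.exists_mul_eq_smul_of_mem_adjoin {K R : Type*} [CommSemiring K]
    [CommSemiring R] [Algebra K R] {S : Set R} {m r : R} (hS : ∀ s ∈ S, s * m = 0)
    (hr : r ∈ Algebra.adjoin K S) : ∃ c : K, m * r = c • m := by
  induction hr using Algebra.adjoin_induction with
  | mem s hs => exact ⟨0, by rw [mul_comm, hS s hs, zero_smul]⟩
  | algebraMap c => exact ⟨c, by rw [mul_comm, ← Algebra.smul_def]⟩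
  | add a b _ _ ha hb =>
    obtain ⟨c, hc⟩ := ha
    obtain ⟨d, hd⟩ := hb
    exact ⟨c + d, by rw [mul_add, hc, hd, add_smul]⟩
  | mul a b _ _ ha hb =>
    obtain ⟨c, hc⟩ := ha
    obtain ⟨d, hd⟩ := hb
    exact ⟨c * d, by rw [← mul_assoc, hc, smul_mul_assoc, hd, smul_smul]⟩

section GradedAlgebra

variable {K R : Type*} [CommSemiring K] [CommSemiring R] [Algebra K R]
  {𝒜 : ℕ → Submodule K R} [GradedAlgebra 𝒜]

theorem mul_eq_zero_of_forall_degree_one_mul_eq_zero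
    (hgen : Algebra.adjoin K (𝒜 1 : Set R) = ⊤) {a b : ℕ} {m z : R} (hm : m ∈ 𝒜 a)
    (hann : ∀ v ∈ 𝒜 1, v * m = 0) (hz : z ∈ 𝒜 b) (hb : b ≠ 0) : m * z = 0 := by
  obtain ⟨c, hc⟩ := Algebra.exists_mul_eq_smul_of_mem_adjoin hann (hgen ▸ Algebra.mem_top)
  have hmz_a : m * z ∈ 𝒜 a := hc ▸ Submodule.smul_mem _ c hm
  exact DirectSum.eq_zero_of_mem_of_mem_of_ne hmz_a (SetLike.mul_mem_graded hm hz) (by omega)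

theorem eq_zero_of_forall_degree_one_mul_eq_zero {N : ℕ}
    (hgen : Algebra.adjoin K (𝒜 1 : Set R) = ⊤)
    (hdual : ∀ i ≤ N, ∀ x ∈ 𝒜 i, x ≠ 0 → ∃ y ∈ 𝒜 (N - i), x * y ≠ 0)
    {a : ℕ} (ha : a < N) {m : R} (hm : m ∈ 𝒜 a) (hann : ∀ v ∈ 𝒜 1, v * m = 0) : m = 0 := by
  by_contra hne
  obtain ⟨z, hz, hmz⟩ := hdual a ha.le m hm hne
  exact hmz (mul_eq_zero_of_forall_degree_one_mul_eq_zero hgen hm hann hz (by omega))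

end GradedAlgebra

theorem nsmul_mul_pow_pred_mul_pow_succ_eq_zero {R : Type*} [CommRing R]
    {i j : ℕ} (hj : 1 ≤ j) {x y v w : R} (hxy : x ^ i * y ^ j = 0)
    (h : i • (v * x ^ (i - 1) * y ^ j) + j • (w * x ^ i * y ^ (j - 1)) = 0) :
    i • (v * (x ^ (i - 1) * y ^ (j + 1))) = 0 := by
  obtain ⟨k, rfl⟩ : ∃ k, j = k + 1 := ⟨j - 1, by omega⟩
  rw [Nat.add_sub_cancel] at h
  linear_combination y * h - ((k + 1) • w) * hxy

theorem ker_coker_first_order_step_general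
    {K : Type*} [Field K] [CharZero K] {R : Type*} [CommRing R] [Algebra K R]
    (𝒜 : ℕ → Submodule K R) [GradedAlgebra 𝒜] (N : ℕ)
    (hgen : Algebra.adjoin K (𝒜 1 : Set R) = ⊤)
    (hdual : ∀ i ≤ N, ∀ x ∈ 𝒜 i, x ≠ 0 → ∃ y ∈ 𝒜 (N - i), x * y ≠ 0)
    {i j : ℕ} (hi : 1 ≤ i) (hj : 1 ≤ j) (hij : i + j + 1 ≤ N)
    {x y : R} (hx : x ∈ 𝒜 1) (hy : y ∈ 𝒜 1)
    (hxy : x ^ i * y ^ j = 0)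
    (hdef : ∀ v ∈ 𝒜 1, ∃ w ∈ 𝒜 1,
      i • (v * x ^ (i - 1) * y ^ j) + j • (w * x ^ i * y ^ (j - 1)) = 0) :
    x ^ (i - 1) * y ^ (j + 1) = 0 := by
  have hm : x ^ (i - 1) * y ^ (j + 1) ∈ 𝒜 (i + j) := by
    convert SetLike.mul_mem_graded (SetLike.pow_mem_graded (i - 1) hx)
      (SetLike.pow_mem_graded (j + 1) hy) using 2
    simp only [smul_eq_mul, mul_one]
    omega
  refine eq_zero_of_forall_degree_one_mul_eq_zero hgen hdual (by omega) hm fun v hv ↦ ?_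
  obtain ⟨w, -, hw⟩ := hdef v hv
  have hi_mul : (i : K) • (v * (x ^ (i - 1) * y ^ (j + 1))) = 0 := by
    rw [Nat.cast_smul_eq_nsmul]
    exact nsmul_mul_pow_pred_mul_pow_succ_eq_zero hj hxy hw
  exact (smul_eq_zero.mp hi_mul).resolve_left (Nat.cast_ne_zero.mpr (by omega))

/-- **First-order ker–coker deformation step.** Let `R` be a standard Artinian Gorenstein
algebra over a field of characteristic `0` with socle in degree `N`.  Let `i, j ≥ 1` with
`i + j ≤ N - 1` and `x, y ∈ R¹` with `x^i y^j = 0`.  If for every `v ∈ R¹` there is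
`w ∈ R¹` with `i·v·x^(i-1)·y^j + j·w·x^i·y^(j-1) = 0`, then `x^(i-1)·y^(j+1) = 0`. -/
theorem ker_coker_first_order_step
    {K : Type*} [Field K] [CharZero K] {R : Type*} [CommRing R] [Algebra K R]
    (𝒜 : ℕ → Submodule K R) [GradedAlgebra 𝒜] (N : ℕ)
    (hfin : ∀ i, FiniteDimensional K (𝒜 i))
    (htop : ∀ i, N < i → 𝒜 i = ⊥)
    (h0 : Module.finrank K (𝒜 0) = 1)
    (hsoc : Module.finrank K (𝒜 N) = 1)
    (hgen : Algebra.adjoin K (𝒜 1 : Set R) = ⊤)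
    (hdual : ∀ i ≤ N, ∀ x ∈ 𝒜 i, x ≠ 0 → ∃ y ∈ 𝒜 (N - i), x * y ≠ 0)
    {i j : ℕ} (hi : 1 ≤ i) (hj : 1 ≤ j) (hij : i + j + 1 ≤ N)
    {x y : R} (hx : x ∈ 𝒜 1) (hy : y ∈ 𝒜 1)
    (hxy : x ^ i * y ^ j = 0)
    (hdef : ∀ v ∈ 𝒜 1, ∃ w ∈ 𝒜 1,
      i • (v * x ^ (i - 1) * y ^ j) + j • (w * x ^ i * y ^ (j - 1)) = 0) :
    x ^ (i - 1) * y ^ (j + 1) = 0 :=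
  ker_coker_first_order_step_general 𝒜 N hgen hdual hi hj hij hx hy hxy hdef
end
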